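/- arXiv:2206.11318 — 7 statements merged into one kernel-verified Lean document; each statement's English description precedes it below -/
import Mathlib

section
/- Let $P$ be a real polynomial of degree $n \ge 1$ satisfying the equioscillation property of modulus 1 on $[0,a]$ with nodes $0 \le t_0 < \cdots < t_n \le a$. Then $P$ is strictly positive and strictly decreasing on $(-\infty, t_0)$. -/
/-!
Between consecutive nodes `P` changes sign, so it has a root in each of the `n` intervals
`(t i, t (i+1))`. As `P` has degree `n`, these are all its roots, and they all lie to the right
of `t 0`. Hence `P x = c * ∏ (r - x)` over the roots `r`, where every factor is positive and
strictly decreasing on `(-∞, t 0)`, and `c > 0` because `P (t 0) = 1`.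
-/

open Polynomial Finset Set

theorem exists_mem_Ioo_eq_zero_of_mul_neg {f : ℝ → ℝ} {u v : ℝ} (huv : u ≤ v)
    (hf : ContinuousOn f (Icc u v)) (h : f u * f v < 0) : ∃ x ∈ Ioo u v, f x = 0 := by
  rcases mul_neg_iff.1 h with ⟨hu, hv⟩ | ⟨hu, hv⟩
  · exact intermediate_value_Ioo' huv hf ⟨hv, hu⟩
  · exact intermediate_value_Ioo huv hf ⟨hu, hv⟩

theorem strictAntiOn_prod_sub {S : Finset ℝ} (hS : S.Nonempty) {b : ℝ} (hb : ∀ r ∈ S, b ≤ r) :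
    StrictAntiOn (fun x => ∏ r ∈ S, (r - x)) (Iio b) := fun _ _ _ hy hxy =>
  prod_lt_prod_of_nonempty (fun r hr => sub_pos.2 (lt_of_lt_of_le hy (hb r hr)))
    (fun _ _ => sub_lt_sub_left hxy _) hS

namespace Polynomial

variable {R : Type*} [CommRing R] [IsDomain R] {P : R[X]} {S : Finset R}

theorem eval_eq_leadingCoeff_mul_prod_sub (hS : ∀ r ∈ S, P.eval r = 0)
    (hcard : P.natDegree ≤ #S) (hP : P ≠ 0) (x : R) :
    P.eval x = (-1) ^ #S * P.leadingCoeff * ∏ r ∈ S, (r - x) := by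
  have hroots : P.roots = S.val := roots_eq_of_natDegree_le_card_of_ne_zero hS hcard hP
  have hcard_roots : Multiset.card P.roots = P.natDegree :=
    (card_roots' P).antisymm (by rwa [hroots])
  conv_lhs => rw [← C_leadingCoeff_mul_prod_multiset_X_sub_C hcard_roots, hroots]
  simp only [eval_mul, eval_C, eval_multiset_prod, Multiset.map_map, Function.comp_def, eval_sub,
    eval_X]
  rw [← Finset.prod_eq_multiset_prod, mul_assoc, mul_left_comm, ← prod_neg]
  simp only [neg_sub]

end Polynomial

theorem Polynomial.eval_pos_and_strictAntiOn_Iio {P : ℝ[X]} {S : Finset ℝ}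
    (hS : ∀ r ∈ S, P.eval r = 0) (hcard : P.natDegree ≤ #S) (hSne : S.Nonempty) {b : ℝ}
    (hb : ∀ r ∈ S, b < r) (hPb : 0 < P.eval b) :
    (∀ x < b, 0 < P.eval x) ∧ StrictAntiOn P.eval (Iio b) := by
  have hP : P ≠ 0 := by rintro rfl; simp at hPb
  have hfac := eval_eq_leadingCoeff_mul_prod_sub hS hcard hP
  have hprod_pos : ∀ x ≤ b, 0 < ∏ r ∈ S, (r - x) := fun x hx =>
    prod_pos fun r hr => sub_pos.2 (hx.trans_lt (hb r hr))
  have hc : 0 < (-1) ^ #S * P.leadingCoeff :=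
    pos_of_mul_pos_left (hfac b ▸ hPb) (hprod_pos b le_rfl).le
  refine ⟨fun x hx => ?_, fun x hx y hy hxy => ?_⟩
  · rw [hfac]
    exact mul_pos hc (hprod_pos x hx.le)
  · simp only [hfac]
    exact mul_lt_mul_of_pos_left
      (strictAntiOn_prod_sub hSne (fun r hr => (hb r hr).le) hx hy hxy) hc

theorem stmt_3_general (n : ℕ) (hn : 1 ≤ n) (P : ℝ[X]) (hdeg : P.natDegree = n)
    (t : Fin (n + 1) → ℝ) (htmono : StrictMono t)
    (hP : ∀ i : Fin (n + 1), P.eval (t i) = (-1 : ℝ) ^ (i : ℕ)) :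
    (∀ x : ℝ, x < t 0 → 0 < P.eval x) ∧
      StrictAntiOn (fun x => P.eval x) (Set.Iio (t 0)) := by
  have hsign (i : Fin n) : P.eval (t i.castSucc) * P.eval (t i.succ) < 0 := by
    simp [hP, pow_succ, ← mul_pow]
  choose r hr hr0 using fun i : Fin n => exists_mem_Ioo_eq_zero_of_mul_neg
    (htmono i.castSucc_lt_succ).le P.continuous.continuousOn (hsign i)
  have hrmono : StrictMono r := fun i j hij =>
    (hr i).2.trans ((htmono.monotone (Fin.succ_le_castSucc_iff.2 hij)).trans_lt (hr j).1)
  have hgt (i : Fin n) : t 0 < r i := (htmono.monotone (Fin.zero_le _)).trans_lt (hr i).1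
  refine eval_pos_and_strictAntiOn_Iio (S := univ.map ⟨r, hrmono.injective⟩) ?_ ?_ ?_ ?_ ?_
  · simpa using hr0
  · simp [hdeg]
  · simpa [Finset.univ_nonempty_iff] using Fin.pos_iff_nonempty.1 hn
  · simpa using hgt
  · simp [hP 0]

/-- a degree-`n ≥ 1` polynomial with the equioscillation property of modulus 1
on `[0,a]` is strictly positive and strictly decreasing on `(-∞, t 0)`. -/
theorem stmt_3 (n : ℕ) (hn : 1 ≤ n) (a : ℝ) (P : ℝ[X]) (hdeg : P.natDegree = n)
    (t : Fin (n + 1) → ℝ) (ht0 : 0 ≤ t 0) (htmono : StrictMono t) (hta : t (Fin.last n) ≤ a)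
    (hP : ∀ i : Fin (n + 1), P.eval (t i) = (-1 : ℝ) ^ (i : ℕ)) :
    (∀ x : ℝ, x < t 0 → 0 < P.eval x) ∧
      StrictAntiOn (fun x => P.eval x) (Set.Iio (t 0)) :=
  stmt_3_general n hn P hdeg t htmono hP
end

section
/- Let $P$ be a real polynomial of degree $n \ge 1$ with equioscillation nodes $0 \le t_0 < \cdots < t_n \le a$ (i.e., $P(t_i) = (-1)^i$). If $t_0 > 0$, then the polynomial $Q(x) = P(x + t_0)$ also satisfies the equioscillation property of modulus 1 on $[0,a]$ (with nodes $t_i - t_0$), and $Q(-1) < P(-1)$. -/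
/-!
Between consecutive nodes `P` changes sign, which gives `n` distinct roots in `(t₀, tₙ)`. Since
`deg P = n` these are all of its roots, so `P(x) = c ∏ (z - x)` over the roots `z`, with `c > 0`
because `P(t₀) = 1`. Left of all roots every factor strictly decreases in `x`, hence
`Q(-1) = P(t₀ - 1) < P(-1)`.
-/

open Polynomial Finset

theorem exists_mem_Ioo_eq_zero_of_mul_neg_s4 {α δ : Type*} [ConditionallyCompleteLinearOrder α]
    [TopologicalSpace α] [OrderTopology α] [DenselyOrdered α] [Ring δ] [LinearOrder δ]
    [IsStrictOrderedRing δ] [TopologicalSpace δ] [OrderClosedTopology δ] {f : α → δ} {a b : α}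
    (hab : a ≤ b) (hf : ContinuousOn f (Set.Icc a b)) (h : f a * f b < 0) :
    ∃ c ∈ Set.Ioo a b, f c = 0 := by
  rcases mul_neg_iff.1 h with ⟨ha, hb⟩ | ⟨ha, hb⟩
  · exact intermediate_value_Ioo' hab hf ⟨hb, ha⟩
  · exact intermediate_value_Ioo hab hf ⟨ha, hb⟩

theorem exists_mem_Ioo_eq_zero_of_eq_neg_one_pow {n : ℕ} {f : ℝ → ℝ} (hf : Continuous f)
    {t : Fin (n + 1) → ℝ} (ht : StrictMono t) (hft : ∀ i, f (t i) = (-1) ^ (i : ℕ)) (i : Fin n) :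
    ∃ x ∈ Set.Ioo (t i.castSucc) (t i.succ), f x = 0 := by
  refine exists_mem_Ioo_eq_zero_of_mul_neg_s4 (ht Fin.castSucc_lt_succ).le hf.continuousOn ?_
  simp [hft, pow_succ]

theorem strictMono_of_mem_Ioo_castSucc_succ {α : Type*} [Preorder α] {n : ℕ}
    {t : Fin (n + 1) → α} (ht : Monotone t) {r : Fin n → α}
    (hr : ∀ i, r i ∈ Set.Ioo (t i.castSucc) (t i.succ)) : StrictMono r :=
  fun i j hij => (hr i).2.trans ((ht (Fin.succ_le_castSucc_iff.2 hij)).trans_lt (hr j).1)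

theorem Polynomial.roots_eq_val_of_natDegree_le_card {R : Type*} [CommRing R] [IsDomain R]
    {p : R[X]} (hp : p ≠ 0) {s : Finset R} (hs : ∀ z ∈ s, p.IsRoot z)
    (hcard : p.natDegree ≤ s.card) : p.roots = s.val := by
  have hle : s.val ≤ p.roots :=
    (Multiset.le_iff_subset s.nodup).2 fun z hz => (mem_roots hp).2 (hs z hz)
  exact (Multiset.eq_of_le_of_card_le hle ((card_roots' p).trans hcard)).symm

theorem Polynomial.Splits.eval_lt_eval_of_forall_lt_roots {R : Type*} [Field R] [LinearOrder R]
    [IsStrictOrderedRing R] {f : R[X]} (hf : f.Splits) (hroots : f.roots ≠ 0) {b x y : R}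
    (hb : ∀ z ∈ f.roots, b < z) (hfb : 0 < f.eval b) (hxy : x < y) (hyb : y ≤ b) :
    f.eval y < f.eval x := by
  set c := f.leadingCoeff * (-1) ^ Multiset.card f.roots
  have heval : ∀ u, f.eval u = c * (f.roots.map (· - u)).prod := by
    intro u
    rw [hf.eval_eq_prod_roots, mul_assoc, ← Multiset.card_map (· - u), ← Multiset.prod_map_neg,
      Multiset.map_map]
    simp only [Function.comp_def, neg_sub]
  have hprod_pos : ∀ u ≤ b, 0 < (f.roots.map (· - u)).prod := fun u hu =>
    Multiset.prod_pos fun w hw => by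
      obtain ⟨z, hz, rfl⟩ := Multiset.mem_map.1 hw
      exact sub_pos.2 (hu.trans_lt (hb z hz))
  have hc : 0 < c := pos_of_mul_pos_left (heval b ▸ hfb) (hprod_pos b le_rfl).le
  rw [heval, heval]
  refine mul_lt_mul_of_pos_left (Multiset.prod_map_lt_prod_map hroots _ _ ?_ ?_) hc
  · exact fun z hz => sub_pos.2 (hyb.trans_lt (hb z hz))
  · exact fun z _ => sub_lt_sub_left hxy z

theorem stmt_4_general (n : ℕ) (hn : 1 ≤ n) (a : ℝ) (P : ℝ[X]) (hdeg : P.natDegree = n)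
    (t : Fin (n + 1) → ℝ) (htmono : StrictMono t) (hta : t (Fin.last n) ≤ a)
    (hP : ∀ i : Fin (n + 1), P.eval (t i) = (-1 : ℝ) ^ (i : ℕ))
    (ht0pos : 0 < t 0) (Q : ℝ[X]) (hQ : Q = P.comp (X + C (t 0))) :
    (StrictMono (fun i => t i - t 0) ∧ 0 ≤ t 0 - t 0 ∧ t (Fin.last n) - t 0 ≤ a ∧
      ∀ i : Fin (n + 1), Q.eval (t i - t 0) = (-1 : ℝ) ^ (i : ℕ)) ∧
    Q.eval (-1) < P.eval (-1) := by
  have hQ_eval : ∀ x, Q.eval x = P.eval (x + t 0) := by simp [hQ, eval_comp]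
  refine ⟨⟨fun i j hij => sub_lt_sub_right (htmono hij) _, (sub_self _).ge, ?_,
    fun i => by simp [hQ_eval, hP]⟩, ?_⟩
  · linarith [htmono.monotone (Fin.zero_le (Fin.last n))]
  choose r hr hroot using exists_mem_Ioo_eq_zero_of_eq_neg_one_pow P.continuous htmono hP
  have hr_mono := strictMono_of_mem_Ioo_castSucc_succ htmono.monotone hr
  have hP0 : P ≠ 0 := by rintro rfl; simpa using hP 0
  have hcard : (univ.image r).card = P.natDegree := by
    rw [card_image_of_injective _ hr_mono.injective, card_univ, Fintype.card_fin, hdeg]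
  have hroots : P.roots = (univ.image r).val :=
    roots_eq_val_of_natDegree_le_card hP0 (by simpa using hroot) hcard.ge
  have hsplit : P.Splits := splits_iff_card_roots.2 (by rw [hroots]; exact hcard)
  have hroots_gt : ∀ z ∈ P.roots, t 0 < z := by
    simp only [hroots, mem_val, mem_image, mem_univ, true_and, forall_exists_index,
      forall_apply_eq_imp_iff]
    exact fun i => (htmono.monotone (Fin.zero_le _)).trans_lt (hr i).1
  have hroots_ne : P.roots ≠ 0 := by
    simp only [hroots, ne_eq, val_eq_zero, image_eq_empty, univ_eq_empty_iff]
    exact fun h => h.elim ⟨0, hn⟩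
  rw [hQ_eval]
  exact hsplit.eval_lt_eval_of_forall_lt_roots hroots_ne hroots_gt (by simp [hP 0])
    (by linarith) (by linarith)

/-- if the first equioscillation node `t 0` is positive, then the shifted
polynomial `Q(x) = P(x + t 0)` also equioscillates on `[0,a]` (with nodes `t i - t 0`)
and satisfies `Q(-1) < P(-1)`. -/
theorem stmt_4 (n : ℕ) (hn : 1 ≤ n) (a : ℝ) (P : ℝ[X]) (hdeg : P.natDegree = n)
    (t : Fin (n + 1) → ℝ) (ht0 : 0 ≤ t 0) (htmono : StrictMono t) (hta : t (Fin.last n) ≤ a)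
    (hP : ∀ i : Fin (n + 1), P.eval (t i) = (-1 : ℝ) ^ (i : ℕ))
    (ht0pos : 0 < t 0) (Q : ℝ[X]) (hQ : Q = P.comp (X + C (t 0))) :
    (StrictMono (fun i => t i - t 0) ∧ 0 ≤ t 0 - t 0 ∧ t (Fin.last n) - t 0 ≤ a ∧
      ∀ i : Fin (n + 1), Q.eval (t i - t 0) = (-1 : ℝ) ^ (i : ℕ)) ∧
    Q.eval (-1) < P.eval (-1) :=
  stmt_4_general n hn a P hdeg t htmono hta hP ht0pos Q hQ
end

section
/- Let $p_1$ and $p_2$ be real polynomials of degree at most $n$, each satisfying the equioscillation property of modulus 1 on $[0,a]$ (possibly with different node sets), and suppose $|p_1(x)| \le 1$ and $|p_2(x)| \le 1$ for all $x \in [0,a]$. Then $p_1 = p_2$. -/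
open Polynomial

/-- A polynomial equioscillates with modulus 1 on `[0,a]` with `n+1` nodes. -/
def Equioscillates (n : ℕ) (a : ℝ) (p : ℝ[X]) : Prop :=
  ∃ t : Fin (n + 1) → ℝ, StrictMono t ∧ 0 ≤ t 0 ∧ t (Fin.last n) ≤ a ∧
    ∀ i : Fin (n + 1), p.eval (t i) = (-1 : ℝ) ^ (i : ℕ)

/-!
For `n = m + 1`, every node of `p` inside `(0, a)` is an interior extremum of `p` on `[0, a]`,
hence a root of `p'`. The `m` interior nodes already exhaust the roots of `p'` (`deg p' ≤ m`),
which forces `t 0 = 0`, i.e. `p 0 = 1`. The polynomial `(m + 1)² (1 - p²) - x (a - x) p'²`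
vanishes at all `m + 2` nodes and its derivative at the `m` interior ones, while its degree is at
most `2m + 1`; so it is zero. Differentiating and cancelling `p'` gives a linear Chebyshev-type
differential equation, whose polynomial solutions are determined by their constant term through a
two-term recursion on the coefficients.
-/

namespace Polynomial

theorem derivative_ne_zero_of_eval_ne {R : Type*} [Semiring R] [IsAddTorsionFree R]
    {p : R[X]} {x y : R} (h : p.eval x ≠ p.eval y) : derivative p ≠ 0 := by
  intro hp
  rw [eq_C_of_natDegree_eq_zero (derivative_eq_zero.1 hp)] at h
  simp at h

theorem isRoot_derivative_of_abs_eval_eq_one {p : ℝ[X]} {b c x : ℝ}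
    (hb : ∀ y ∈ Set.Icc b c, |p.eval y| ≤ 1) (hx : x ∈ Set.Ioo b c) (h1 : |p.eval x| = 1) :
    (derivative p).IsRoot x := by
  have hmax : IsLocalMax (fun y => (p ^ 2).eval y) x := by
    filter_upwards [Icc_mem_nhds hx.1 hx.2] with y hy
    simpa only [eval_pow, sq_le_sq, h1] using hb y hy
  have := hmax.deriv_eq_zero
  rw [Polynomial.deriv, derivative_sq, eval_mul, eval_mul, mul_eq_zero, mul_eq_zero] at this
  refine this.resolve_left ?_
  rintro (h | h)
  · simp at h
  · simp [h] at h1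

section CommRing

variable {R : Type*} [CommRing R]

theorem eq_zero_of_natDegree_lt_card_add_card [IsDomain R]
    (p : R[X]) {s d : Finset R} (hds : d ⊆ s) (hs : ∀ x ∈ s, p.IsRoot x)
    (hd : ∀ x ∈ d, (derivative p).IsRoot x) (hcard : p.natDegree < s.card + d.card) :
    p = 0 := by
  classical
  by_contra hp
  have hle : s.val + d.val ≤ p.roots := by
    refine Multiset.le_iff_count.2 fun x => ?_
    rw [Multiset.count_add, Multiset.count_eq_of_nodup s.nodup,
      Multiset.count_eq_of_nodup d.nodup, count_roots]
    by_cases hxd : x ∈ d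
    · have := (one_lt_rootMultiplicity_iff_isRoot hp).2 ⟨hs x (hds hxd), hd x hxd⟩
      simp only [Finset.mem_val, hds hxd, hxd, if_true]
      omega
    · by_cases hxs : x ∈ s
      · have := (rootMultiplicity_pos hp).2 (hs x hxs)
        simp only [Finset.mem_val, hxs, hxd, if_true, if_false]
        omega
      · simp [hxs, hxd]
  have := (Multiset.card_le_card hle).trans (card_roots' p)
  simp only [Multiset.card_add, Finset.card_val] at this
  omega

theorem natDegree_C_mul_sub_X_mul_derivative_le {p : R[X]} {n : ℕ} (hp : p.natDegree ≤ n + 1) :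
    (C ((n : R) + 1) * p - X * derivative p).natDegree ≤ n := by
  refine natDegree_le_iff_coeff_eq_zero.2 fun k hk => ?_
  obtain ⟨j, rfl⟩ : ∃ j, k = j + 1 := ⟨k - 1, by omega⟩
  rw [coeff_sub, coeff_C_mul, coeff_X_mul, coeff_derivative]
  rcases eq_or_lt_of_le (show n + 1 ≤ j + 1 by omega) with h | h
  · obtain rfl : j = n := by omega
    ring
  · rw [coeff_eq_zero_of_natDegree_lt (hp.trans_lt h)]; ring

/-- Chebyshev's equation `(1 - s²) y'' - s y' + c y = 0` transported to `[0, a]` by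
`s = 1 - 2x/a` and multiplied by `2`. -/
noncomputable def shiftedChebyshevOperator (a c : R) (q : R[X]) : R[X] :=
  2 * X * (C a - X) * derivative (derivative q) + (C a - 2 * X) * derivative q + 2 * C c * q

/-- Transported to `[0, a]` in the same way, `n² (1 - T_n²) = (1 - s²) T_n'²` says that
`chebyshevDefect a (n ^ 2) (T_n (1 - 2X/a)) = 0`. -/
noncomputable def chebyshevDefect (a c : R) (p : R[X]) : R[X] :=
  C c * (1 - p ^ 2) - X * (C a - X) * derivative p ^ 2

theorem derivative_chebyshevDefect (a c : R) (p : R[X]) :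
    derivative (chebyshevDefect a c p) = -(derivative p * shiftedChebyshevOperator a c p) := by
  simp only [chebyshevDefect, shiftedChebyshevOperator, derivative_mul, derivative_sub,
    derivative_pow, derivative_one, derivative_X, derivative_C, Nat.cast_ofNat, map_ofNat]
  ring

theorem shiftedChebyshevOperator_eq_zero [IsDomain R] {a c : R} {p : R[X]}
    (hp : derivative p ≠ 0) (h : chebyshevDefect a c p = 0) :
    shiftedChebyshevOperator a c p = 0 := by
  simpa [hp] using congrArg derivative h |>.symm.trans (derivative_chebyshevDefect a c p)

theorem natDegree_chebyshevDefect_le (a : R) {p : R[X]} {n : ℕ} (hp : p.natDegree ≤ n + 1) :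
    (chebyshevDefect a (((n : R) + 1) ^ 2) p).natDegree ≤ 2 * n + 1 := by
  have hp' : (derivative p).natDegree ≤ n := (natDegree_derivative_le p).trans (by omega)
  -- the top coefficients cancel because `(n + 1) p - X p'` has degree at most `n`
  have factor : chebyshevDefect a (((n : R) + 1) ^ 2) p = C (((n : R) + 1) ^ 2)
      - (C ((n : R) + 1) * p - X * derivative p) * (C ((n : R) + 1) * p + X * derivative p)
      - C a * (X * derivative p ^ 2) := by
    simp only [chebyshevDefect, map_pow]
    ring
  rw [factor]
  refine (natDegree_sub_le _ _).trans (max_le ((natDegree_sub_le _ _).trans (max_le ?_ ?_)) ?_)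
  · exact (natDegree_C _).trans_le (Nat.zero_le _)
  · refine (natDegree_mul_le_of_le (natDegree_C_mul_sub_X_mul_derivative_le hp)
      (natDegree_add_le_of_degree_le ((natDegree_C_mul_le _ _).trans hp) ?_)).trans (by omega)
    exact (natDegree_mul_le_of_le natDegree_X_le hp').trans (by omega)
  · refine (natDegree_C_mul_le _ _).trans ?_
    refine (natDegree_mul_le_of_le natDegree_X_le (natDegree_pow_le_of_le 2 hp')).trans ?_
    omega

theorem coeff_shiftedChebyshevOperator (a c : R) (q : R[X]) (k : ℕ) :
    (shiftedChebyshevOperator a c q).coeff k =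
      a * (k + 1) * (2 * k + 1) * q.coeff (k + 1) + 2 * (c - k ^ 2) * q.coeff k := by
  have expand : shiftedChebyshevOperator a c q =
      C (2 * a) * (X * derivative (derivative q)) - 2 * (X * (X * derivative (derivative q)))
        + C a * derivative q - 2 * (X * derivative q) + C (2 * c) * q := by
    simp only [shiftedChebyshevOperator, map_mul, map_ofNat]
    ring
  rw [expand]
  rcases k with _ | _ | j <;>
  · simp only [coeff_add, coeff_sub, coeff_C_mul, coeff_ofNat_mul, coeff_X_mul,
      coeff_X_mul_zero, coeff_derivative]
    push_cast
    ring

theorem eq_of_shiftedChebyshevOperator_eq_zero [IsDomain R] [CharZero R] {a c : R} (ha : a ≠ 0)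
    {p q : R[X]} (hp : shiftedChebyshevOperator a c p = 0)
    (hq : shiftedChebyshevOperator a c q = 0) (h0 : p.coeff 0 = q.coeff 0) : p = q := by
  ext k
  induction k with
  | zero => exact h0
  | succ k ih =>
    have hpk := coeff_shiftedChebyshevOperator a c p k
    have hqk := coeff_shiftedChebyshevOperator a c q k
    rw [hp, coeff_zero] at hpk
    rw [hq, coeff_zero] at hqk
    have hne : a * ((k : R) + 1) * (2 * k + 1) ≠ 0 := by
      refine mul_ne_zero (mul_ne_zero ha (Nat.cast_add_one_ne_zero k)) ?_
      exact_mod_cast (2 * k).succ_ne_zero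
    refine mul_left_cancel₀ hne ?_
    linear_combination hqk - hpk - 2 * (c - k ^ 2) * ih

end CommRing

end Polynomial

namespace Equioscillates

section Nodes

variable {m : ℕ} {a : ℝ} {p : ℝ[X]} {t : Fin (m + 2) → ℝ}

theorem isRoot_derivative_of_node_mem_Ioo (hb : ∀ x ∈ Set.Icc (0 : ℝ) a, |p.eval x| ≤ 1)
    (hev : ∀ i, p.eval (t i) = (-1 : ℝ) ^ (i : ℕ)) {i : Fin (m + 2)}
    (hi : t i ∈ Set.Ioo 0 a) : (derivative p).IsRoot (t i) :=
  isRoot_derivative_of_abs_eval_eq_one hb hi (by simp [hev i])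

theorem derivative_ne_zero (hev : ∀ i, p.eval (t i) = (-1 : ℝ) ^ (i : ℕ)) :
    derivative p ≠ 0 :=
  derivative_ne_zero_of_eval_ne (x := t 0) (y := t 1) (by norm_num [hev])

/-- Otherwise `t 0, …, t m` would be `m + 1` interior extrema, i.e. roots of `p'`. -/
theorem node_zero_eq_zero (hd : p.natDegree ≤ m + 1) (ht : StrictMono t) (h0 : 0 ≤ t 0)
    (hl : t (Fin.last (m + 1)) ≤ a) (hev : ∀ i, p.eval (t i) = (-1 : ℝ) ^ (i : ℕ))
    (hb : ∀ x ∈ Set.Icc (0 : ℝ) a, |p.eval x| ≤ 1) : t 0 = 0 := by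
  by_contra h
  have hpos : 0 < t 0 := lt_of_le_of_ne h0 (Ne.symm h)
  refine derivative_ne_zero hev (eq_zero_of_natDegree_lt_card_of_eval_eq_zero _
    (f := fun i : Fin (m + 1) => t i.castSucc) (ht.injective.comp (Fin.castSucc_injective _))
    (fun i => isRoot_derivative_of_node_mem_Ioo hb hev ⟨?_, ?_⟩) ?_)
  · exact hpos.trans_le (ht.monotone (Fin.zero_le _))
  · exact (ht (Fin.castSucc_lt_last i)).trans_le hl
  · rw [Fintype.card_fin]
    exact (natDegree_derivative_le p).trans_lt (by omega)

theorem chebyshevDefect_eq_zero (hd : p.natDegree ≤ m + 1) (ht : StrictMono t) (h0 : 0 ≤ t 0)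
    (hl : t (Fin.last (m + 1)) ≤ a) (hev : ∀ i, p.eval (t i) = (-1 : ℝ) ^ (i : ℕ))
    (hb : ∀ x ∈ Set.Icc (0 : ℝ) a, |p.eval x| ≤ 1) :
    chebyshevDefect a (((m : ℝ) + 1) ^ 2) p = 0 := by
  have hIcc : ∀ i, t i ∈ Set.Icc 0 a := fun i =>
    ⟨h0.trans (ht.monotone (Fin.zero_le i)), (ht.monotone (Fin.le_last i)).trans hl⟩
  have hroot : ∀ i, (chebyshevDefect a (((m : ℝ) + 1) ^ 2) p).IsRoot (t i) := by
    intro i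
    have hvanish : t i * (a - t i) * (derivative p).eval (t i) = 0 := by
      rcases (hIcc i).1.eq_or_lt with h | h
      · simp [← h]
      rcases (hIcc i).2.eq_or_lt with h' | h'
      · simp [h']
      · rw [(isRoot_derivative_of_node_mem_Ioo hb hev ⟨h, h'⟩).eq_zero, mul_zero]
    have hsq : p.eval (t i) ^ 2 = 1 := by rw [hev, ← pow_mul, pow_mul', neg_one_sq, one_pow]
    simp only [IsRoot, chebyshevDefect, eval_sub, eval_mul, eval_pow, eval_C, eval_one, eval_X,
      hsq]
    linear_combination -(derivative p).eval (t i) * hvanish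
  have hroot' : ∀ i ∈ Finset.Ioo 0 (Fin.last (m + 1)),
      (derivative (chebyshevDefect a (((m : ℝ) + 1) ^ 2) p)).IsRoot (t i) := by
    intro i hi
    rw [Finset.mem_Ioo] at hi
    have hcrit := isRoot_derivative_of_node_mem_Ioo hb hev
      ⟨(hIcc 0).1.trans_lt (ht hi.1), (ht hi.2).trans_le hl⟩
    simp [derivative_chebyshevDefect, hcrit.eq_zero]
  refine eq_zero_of_natDegree_lt_card_add_card _
    (Finset.image_subset_image (Finset.subset_univ (Finset.Ioo 0 (Fin.last (m + 1)))))
    (Finset.forall_mem_image.2 fun i _ => hroot i) (Finset.forall_mem_image.2 hroot') ?_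
  rw [Finset.card_image_of_injective _ ht.injective,
    Finset.card_image_of_injective _ ht.injective, Finset.card_univ, Fintype.card_fin, Fin.card_Ioo]
  refine (natDegree_chebyshevDefect_le a hd).trans_lt ?_
  rw [Fin.val_last, Fin.val_zero]
  omega

end Nodes

variable {a : ℝ} {p : ℝ[X]}

theorem eq_one (hd : p.natDegree ≤ 0) (he : Equioscillates 0 a p) : p = 1 := by
  obtain ⟨t, -, -, -, hev⟩ := he
  rw [eq_C_of_natDegree_le_zero hd] at hev ⊢
  rw [← C_1, C_inj]
  simpa using hev 0

variable {m : ℕ}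

theorem pos (he : Equioscillates (m + 1) a p) : 0 < a := by
  obtain ⟨t, ht, h0, hl, -⟩ := he
  exact h0.trans_lt ((ht (Fin.pos_of_ne_zero (Fin.last_pos.ne'))).trans_le hl)

theorem eval_zero (hd : p.natDegree ≤ m + 1) (he : Equioscillates (m + 1) a p)
    (hb : ∀ x ∈ Set.Icc (0 : ℝ) a, |p.eval x| ≤ 1) : p.eval 0 = 1 := by
  obtain ⟨t, ht, h0, hl, hev⟩ := he
  simpa [node_zero_eq_zero hd ht h0 hl hev hb] using hev 0

theorem shiftedChebyshevOperator_eq_zero (hd : p.natDegree ≤ m + 1)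
    (he : Equioscillates (m + 1) a p) (hb : ∀ x ∈ Set.Icc (0 : ℝ) a, |p.eval x| ≤ 1) :
    shiftedChebyshevOperator a (((m : ℝ) + 1) ^ 2) p = 0 := by
  obtain ⟨t, ht, h0, hl, hev⟩ := he
  exact Polynomial.shiftedChebyshevOperator_eq_zero (derivative_ne_zero hev)
    (chebyshevDefect_eq_zero hd ht h0 hl hev hb)

end Equioscillates

/-- uniqueness of an equioscillating polynomial of degree at most `n`
that is bounded by 1 in absolute value on `[0,a]`. -/
theorem stmt_5 (n : ℕ) (a : ℝ) (p₁ p₂ : ℝ[X])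
    (hd₁ : p₁.natDegree ≤ n) (hd₂ : p₂.natDegree ≤ n)
    (he₁ : Equioscillates n a p₁) (he₂ : Equioscillates n a p₂)
    (hb₁ : ∀ x ∈ Set.Icc (0 : ℝ) a, |p₁.eval x| ≤ 1)
    (hb₂ : ∀ x ∈ Set.Icc (0 : ℝ) a, |p₂.eval x| ≤ 1) :
    p₁ = p₂ := by
  rcases n with _ | m
  · rw [he₁.eq_one hd₁, he₂.eq_one hd₂]
  · refine eq_of_shiftedChebyshevOperator_eq_zero he₁.pos.ne'
      (he₁.shiftedChebyshevOperator_eq_zero hd₁ hb₁)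
      (he₂.shiftedChebyshevOperator_eq_zero hd₂ hb₂) ?_
    rw [coeff_zero_eq_eval_zero, coeff_zero_eq_eval_zero, he₁.eval_zero hd₁ hb₁,
      he₂.eval_zero hd₂ hb₂]
end

section
/- Let $a > 0$, $n \ge 1$, and let $p$ be any real polynomial of degree at most $n$ satisfying the equioscillation property of modulus 1 on $[0,a]$. Then $p(-1) \ge T_n(1 + 2/a)$, where $T_n$ is the Chebyshev polynomial of the first kind of degree $n$, with equality if and only if $p(x) = T_n(1 - 2x/a)$. -/
open Polynomial

section Aux

lemma cheb_natDegree_le : ∀ k : ℕ, (Polynomial.Chebyshev.T ℝ k).natDegree ≤ k := by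
  intro k
  induction k using Nat.strong_induction_on with
  | _ k ih =>
    match k, ih with
    | 0, _ => simp [Polynomial.Chebyshev.T_zero]
    | 1, _ => simp [Polynomial.Chebyshev.T_one]
    | (k+2), ih =>
      have h1 := ih (k+1) (by omega)
      have h0 := ih k (by omega)
      have hrec : Polynomial.Chebyshev.T ℝ (k+2 : ℕ) =
          2 * X * Polynomial.Chebyshev.T ℝ (k+1 : ℕ) - Polynomial.Chebyshev.T ℝ (k : ℕ) := by
        push_cast
        exact Polynomial.Chebyshev.T_add_two ℝ k
      rw [hrec]
      refine le_trans (natDegree_sub_le _ _) (max_le ?_ (by omega))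
      refine le_trans natDegree_mul_le ?_
      have h2 : (2 * X : ℝ[X]).natDegree ≤ 1 := le_trans natDegree_mul_le (by simp)
      omega

lemma cheb_abs_le (m : ℤ) {x : ℝ} (hx1 : -1 ≤ x) (hx2 : x ≤ 1) :
    |(Polynomial.Chebyshev.T ℝ m).eval x| ≤ 1 := by
  have : x = Real.cos (Real.arccos x) := (Real.cos_arccos hx1 hx2).symm
  rw [this, Polynomial.Chebyshev.T_real_cos]
  exact Real.abs_cos_le_one _

lemma prod_neg_aux {n : ℕ} (f : Fin (n+1) → ℝ) (s : Finset (Fin (n+1))) :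
    ∏ x ∈ s, f x = (-1)^s.card * ∏ x ∈ s, -f x := by
  have h : ∀ x ∈ s, f x = (-1) * (-f x) := fun x _ => by ring
  rw [Finset.prod_congr rfl h, Finset.prod_mul_distrib, Finset.prod_const]

lemma erase_eq_Iio_union_Ioi {n : ℕ} (i : Fin (n+1)) :
    Finset.univ.erase i = Finset.Iio i ∪ Finset.Ioi i := by
  ext j; simp [Finset.mem_erase, lt_or_lt_iff_ne, ne_comm]

/-- the sign of the Lagrange basis polynomial at `-1`. -/
lemma basis_eval_neg_one_pos {n : ℕ} (t : Fin (n+1) → ℝ) (ht : StrictMono t)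
    (ht0 : 0 ≤ t 0) (i : Fin (n+1)) :
    0 < (-1 : ℝ)^(i : ℕ) * (Lagrange.basis Finset.univ t i).eval (-1) := by
  have htnn : ∀ j, 0 ≤ t j := fun j => le_trans ht0 (ht.monotone (Fin.zero_le j))
  have heval : (Lagrange.basis Finset.univ t i).eval (-1) =
      ∏ j ∈ Finset.univ.erase i, ((t i - t j)⁻¹ * (-1 - t j)) := by
    rw [Lagrange.basis, eval_prod]
    exact Finset.prod_congr rfl fun j _ => by simp [Lagrange.basisDivisor]
  set g : Fin (n+1) → ℝ := fun j => (t i - t j)⁻¹ * (-1 - t j) with hg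
  have hpos : ∀ j ∈ Finset.Ioi i, 0 < g j := by
    intro j hj
    rw [Finset.mem_Ioi] at hj
    have h1 : t i - t j < 0 := by linarith [ht hj]
    have h2 : -1 - t j < 0 := by linarith [htnn j]
    have hi1 : (t i - t j)⁻¹ < 0 := inv_lt_zero.mpr h1
    have := mul_pos_of_neg_of_neg hi1 h2
    simpa [hg] using this
  have hneg : ∀ j ∈ Finset.Iio i, 0 < -g j := by
    intro j hj
    rw [Finset.mem_Iio] at hj
    have h1 : 0 < t i - t j := by linarith [ht hj]
    have h2 : -1 - t j < 0 := by linarith [htnn j]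
    have hi1 : 0 < (t i - t j)⁻¹ := inv_pos.mpr h1
    have := mul_neg_of_pos_of_neg hi1 h2
    simp only [hg, neg_pos]
    exact this
  have hdisj : Disjoint (Finset.Iio i) (Finset.Ioi i) := by
    rw [Finset.disjoint_left]
    intro j hj hj'
    rw [Finset.mem_Iio] at hj; rw [Finset.mem_Ioi] at hj'
    exact absurd (hj.trans hj') (lt_irrefl _)
  rw [heval, erase_eq_Iio_union_Ioi, Finset.prod_union hdisj,
    prod_neg_aux g (Finset.Iio i), Fin.card_Iio]
  have hA : 0 < ∏ x ∈ Finset.Iio i, -g x := Finset.prod_pos hneg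
  have hB : 0 < ∏ x ∈ Finset.Ioi i, g x := Finset.prod_pos hpos
  have hsq : (-1 : ℝ)^(i : ℕ) * (-1 : ℝ)^(i : ℕ) = 1 := by
    rw [← pow_add]
    exact Even.neg_one_pow ⟨(i : ℕ), rfl⟩
  calc (0:ℝ) < ((∏ x ∈ Finset.Iio i, -g x) * ∏ x ∈ Finset.Ioi i, g x) := mul_pos hA hB
    _ = (-1 : ℝ)^(i : ℕ) * ((-1)^(i : ℕ) * (∏ x ∈ Finset.Iio i, -g x) *
        ∏ x ∈ Finset.Ioi i, g x) := by rw [← mul_assoc, ← mul_assoc, hsq, one_mul]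

end Aux

/-- any equioscillating polynomial of degree at most `n` on `[0,a]`
satisfies `p(-1) ≥ T_n(1 + 2/a)`, with equality iff `p(x) = T_n(1 - 2x/a)`. -/
theorem stmt_7 (n : ℕ) (hn : 1 ≤ n) (a : ℝ) (ha : 0 < a)
    (p : ℝ[X]) (hd : p.natDegree ≤ n) (he : Equioscillates n a p) :
    (Polynomial.Chebyshev.T ℝ n).eval (1 + 2 / a) ≤ p.eval (-1) ∧
      (p.eval (-1) = (Polynomial.Chebyshev.T ℝ n).eval (1 + 2 / a) ↔
        p = (Polynomial.Chebyshev.T ℝ n).comp (C 1 - C (2 / a) * X)) := by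
  obtain ⟨t, ht, ht0, hta, htv⟩ := he
  set q : ℝ[X] := (Polynomial.Chebyshev.T ℝ n).comp (C 1 - C (2 / a) * X) with hqdef
  have hinj : Set.InjOn t ↑(Finset.univ : Finset (Fin (n+1))) := ht.injective.injOn
  have hcard : (Finset.univ : Finset (Fin (n+1))).card = n + 1 := by simp
  -- bounds on the nodes
  have htmem : ∀ i, 0 ≤ t i ∧ t i ≤ a := fun i =>
    ⟨le_trans ht0 (ht.monotone (Fin.zero_le i)),
     le_trans (ht.monotone (Fin.le_last i)) hta⟩
  -- evaluation of q
  have hq_ev : ∀ x : ℝ, q.eval x = (Polynomial.Chebyshev.T ℝ n).eval (1 - 2 / a * x) := by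
    intro x; rw [hqdef, eval_comp]; simp
  have hq_neg_one : q.eval (-1) = (Polynomial.Chebyshev.T ℝ n).eval (1 + 2 / a) := by
    rw [hq_ev]; ring_nf
  -- degree of q
  have hqdeg : q.natDegree ≤ n := by
    rw [hqdef]
    refine le_trans (natDegree_comp_le) ?_
    have h1 : (Polynomial.Chebyshev.T ℝ n).natDegree ≤ n := cheb_natDegree_le n
    have h2 : (C (1:ℝ) - C (2 / a) * X).natDegree ≤ 1 := by
      refine le_trans (natDegree_sub_le _ _) (max_le (by simp) ?_)
      exact le_trans natDegree_mul_le (by simp)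
    calc (Polynomial.Chebyshev.T ℝ n).natDegree * (C (1:ℝ) - C (2 / a) * X).natDegree
        ≤ n * 1 := Nat.mul_le_mul h1 h2
      _ = n := mul_one n
  -- |q (t i)| ≤ 1
  have hq_bound : ∀ i, |q.eval (t i)| ≤ 1 := by
    intro i
    rw [hq_ev]
    obtain ⟨h0, h1⟩ := htmem i
    have hA : 0 ≤ 2 / a * t i := mul_nonneg (le_of_lt (div_pos two_pos ha)) h0
    have hB : 2 / a * t i ≤ 2 / a * a :=
      mul_le_mul_of_nonneg_left h1 (le_of_lt (div_pos two_pos ha))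
    have hC : 2 / a * a = 2 := by field_simp
    exact cheb_abs_le n (by linarith) (by linarith)
  -- key interpolation identity
  have key : ∀ f : ℝ[X], f.natDegree ≤ n → f.eval (-1) =
      ∑ i : Fin (n+1), f.eval (t i) * (Lagrange.basis Finset.univ t i).eval (-1) := by
    intro f hf
    have hdeg : f.degree < ((Finset.univ : Finset (Fin (n+1))).card : WithBot ℕ) := by
      rw [hcard]
      calc f.degree ≤ (f.natDegree : WithBot ℕ) := degree_le_natDegree
        _ ≤ (n : WithBot ℕ) := by exact_mod_cast hf
        _ < ((n+1 : ℕ) : WithBot ℕ) := by exact_mod_cast Nat.lt_succ_self n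
    have := Lagrange.eq_interpolate hinj hdeg
    conv_lhs => rw [this]
    rw [Lagrange.interpolate_apply, eval_finset_sum]
    exact Finset.sum_congr rfl fun i _ => by rw [eval_mul, eval_C]
  set L : Fin (n+1) → ℝ := fun i => (Lagrange.basis Finset.univ t i).eval (-1) with hL
  have hLpos : ∀ i : Fin (n+1), 0 < (-1 : ℝ)^(i : ℕ) * L i := by
    intro i; exact basis_eval_neg_one_pos t ht ht0 i
  -- difference
  have hdiff : p.eval (-1) - q.eval (-1) =
      ∑ i : Fin (n+1), ((1 : ℝ) - (-1)^(i : ℕ) * q.eval (t i)) * ((-1)^(i : ℕ) * L i) := by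
    have h1 := key p hd
    have h2 := key q hqdeg
    rw [h1, h2, ← Finset.sum_sub_distrib]
    refine Finset.sum_congr rfl fun i _ => ?_
    rw [htv i]
    simp only [hL]
    have hsq : (-1 : ℝ)^(i : ℕ) * (-1 : ℝ)^(i : ℕ) = 1 := by
      rw [← pow_add]; exact Even.neg_one_pow ⟨(i : ℕ), rfl⟩
    linear_combination (q.eval (t i) * (Lagrange.basis Finset.univ t i).eval (-1)) * hsq
  have hterm_nonneg : ∀ i : Fin (n+1), (0:ℝ) ≤
      ((1 : ℝ) - (-1)^(i : ℕ) * q.eval (t i)) * ((-1)^(i : ℕ) * L i) := by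
    intro i
    have habs : |(-1 : ℝ)^(i : ℕ) * q.eval (t i)| = |q.eval (t i)| := by
      rw [abs_mul, abs_pow, abs_neg, abs_one, one_pow, one_mul]
    have h1 : (-1 : ℝ)^(i : ℕ) * q.eval (t i) ≤ 1 := by
      have h2 := le_abs_self ((-1 : ℝ)^(i : ℕ) * q.eval (t i))
      have h3 := hq_bound i
      linarith [habs ▸ h2]
    exact mul_nonneg (by linarith) (le_of_lt (hLpos i))
  have hge : q.eval (-1) ≤ p.eval (-1) := by
    have hs := Finset.sum_nonneg (s := Finset.univ) fun i _ => hterm_nonneg i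
    rw [← hdiff] at hs
    linarith
  constructor
  · rw [← hq_neg_one]; exact hge
  constructor
  · -- equality → p = q
    intro heq
    have hzero : ∑ i : Fin (n+1),
        ((1 : ℝ) - (-1)^(i : ℕ) * q.eval (t i)) * ((-1)^(i : ℕ) * L i) = 0 := by
      rw [← hdiff, heq, hq_neg_one]; ring
    have hall := (Finset.sum_eq_zero_iff_of_nonneg fun i _ => hterm_nonneg i).mp hzero
    have hq_nodes : ∀ i : Fin (n+1), q.eval (t i) = (-1 : ℝ)^(i : ℕ) := by
      intro i
      have h := hall i (Finset.mem_univ i)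
      have h2 : (1 : ℝ) - (-1)^(i : ℕ) * q.eval (t i) = 0 := by
        rcases mul_eq_zero.mp h with h' | h'
        · exact h'
        · exact absurd h' (ne_of_gt (hLpos i))
      have hsq : (-1 : ℝ)^(i : ℕ) * (-1 : ℝ)^(i : ℕ) = 1 := by
        rw [← pow_add]; exact Even.neg_one_pow ⟨(i : ℕ), rfl⟩
      linear_combination (-(-1:ℝ)^(i : ℕ)) * h2 - q.eval (t i) * hsq
    have hsub : p - q = 0 := by
      refine Polynomial.eq_zero_of_natDegree_lt_card_of_eval_eq_zero (p - q) ht.injective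
        (fun i => ?_) ?_
      · rw [eval_sub, htv i, hq_nodes i, sub_self]
      · calc (p - q).natDegree ≤ max p.natDegree q.natDegree := natDegree_sub_le _ _
          _ ≤ n := max_le hd hqdeg
          _ < n + 1 := Nat.lt_succ_self n
          _ = Fintype.card (Fin (n+1)) := (Fintype.card_fin (n+1)).symm
    exact sub_eq_zero.mp hsub
  · intro hp
    rw [hp]
    exact hq_neg_one
end

section
/- Let $a > 0$, $n \ge 1$, and $t_i^* = \frac{a}{2}(1 - \cos(i\pi/n))$ for $i = 0,\dots,n$. Let $w_i^* = \ell_i(-1)$ where $\ell_i$ are the Lagrange basis polynomials for the nodes $t_0^*, \dots, t_n^*$. Then $\sum_{i=0}^n |w_i^*| = T_n(1 + 2/a)$, where $T_n$ is the Chebyshev polynomial of the first kind of degree $n$. -/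
open Polynomial Real

theorem twoX_deg (R : Type*) [CommRing R] : (2 * X : R[X]).degree ≤ 1 := by
  refine le_trans (degree_mul_le _ _) ?_
  rw [show (1 : WithBot ℕ) = 0 + 1 from by norm_num]
  have h2 : (2:R[X]).degree ≤ 0 := by
    rw [show (2:R[X]) = C 2 from (map_ofNat C 2).symm]; exact degree_C_le
  exact add_le_add h2 degree_X_le

theorem cheb_deg (R : Type*) [CommRing R] (n : ℕ) :
    (Chebyshev.T R n).degree ≤ n := by
  induction n using Nat.twoStepInduction with
  | zero => rw [show ((0:ℕ):ℤ)=0 from rfl, Chebyshev.T_zero]; exact degree_one_le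
  | one => simp [Chebyshev.T_one, degree_X_le]
  | more n ih1 ih2 =>
    have h : Chebyshev.T R ((n : ℤ) + 2) = 2 * X * Chebyshev.T R (n + 1) - Chebyshev.T R n :=
      Chebyshev.T_add_two R n
    have hc : ((n + 2 : ℕ) : ℤ) = (n : ℤ) + 2 := by push_cast; ring
    rw [hc, h]
    refine le_trans (degree_sub_le _ _) (max_le ?_ ?_)
    · refine le_trans (degree_mul_le _ _) ?_
      have h1 : ((n+1 : ℕ) : ℤ) = (n : ℤ) + 1 := by push_cast; ring
      calc (2 * X : R[X]).degree + (Chebyshev.T R ((n:ℤ)+1)).degree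
          ≤ 1 + ((n+1 : ℕ) : WithBot ℕ) := add_le_add (twoX_deg R) (h1 ▸ ih2)
        _ ≤ ((n+2 : ℕ) : WithBot ℕ) := by
            rw [← Nat.cast_one, ← Nat.cast_add, Nat.cast_le]; omega
    · exact le_trans ih1 (by rw [Nat.cast_le]; omega)

/-- the ℓ¹ norm of the optimal weights equals `T_n(1 + 2/a)`. -/
theorem stmt_10 (n : ℕ) (hn : 1 ≤ n) (a : ℝ) (ha : 0 < a)
    (t : Fin (n + 1) → ℝ)
    (ht : ∀ i : Fin (n + 1), t i = a / 2 * (1 - Real.cos ((i : ℕ) * π / n)))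
    (w : Fin (n + 1) → ℝ)
    (hw : ∀ i, w i = (Lagrange.basis Finset.univ t i).eval (-1)) :
    ∑ i : Fin (n + 1), |w i| = (Polynomial.Chebyshev.T ℝ n).eval (1 + 2 / a) := by
  have hn0 : (n:ℝ) ≠ 0 := Nat.cast_ne_zero.mpr (by omega)
  have hnpos : (0:ℝ) < n := by positivity
  have hπ := Real.pi_pos
  have ha' : a ≠ 0 := ne_of_gt ha
  -- membership of the angles in [0, π]
  have hmem : ∀ i : Fin (n+1), ((i:ℕ) * π / n) ∈ Set.Icc 0 π := by
    intro i
    constructor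
    · positivity
    · rw [div_le_iff₀ hnpos]
      have : ((i:ℕ):ℝ) ≤ n := by exact_mod_cast Nat.lt_succ_iff.mp i.isLt
      nlinarith
  -- t is strictly monotone
  have hmono : StrictMono t := by
    intro i j hij
    rw [ht i, ht j]
    have hlt : ((i:ℕ):ℝ) * π / n < ((j:ℕ):ℝ) * π / n := by
      have : ((i:ℕ):ℝ) < (j:ℕ) := by exact_mod_cast hij
      rw [div_lt_div_iff₀ hnpos hnpos]
      nlinarith [mul_pos (mul_pos (sub_pos.mpr this) hπ) hnpos]
    have hcos := Real.strictAntiOn_cos (hmem i) (hmem j) hlt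
    nlinarith
  have hinj : Set.InjOn t (Finset.univ : Finset (Fin (n+1))) :=
    fun x _ y _ h => hmono.injective h
  -- the polynomial q
  set q : ℝ[X] := (Chebyshev.T ℝ n).comp (C 1 - C (2/a) * X) with hqdef
  have heval : ∀ i : Fin (n+1), q.eval (t i) = (-1:ℝ)^(i:ℕ) := by
    intro i
    have hcos : (1:ℝ) - 2/a * t i = Real.cos ((i:ℕ) * π / n) := by
      rw [ht]; field_simp; ring
    rw [hqdef, eval_comp]
    simp only [eval_sub, eval_mul, eval_C, eval_X, eval_one]
    rw [hcos, Polynomial.Chebyshev.T_real_cos]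
    have harg : (((n:ℤ)):ℝ) * ((i:ℕ) * π / n) = (i:ℕ) * π := by
      push_cast; field_simp
    rw [harg]
    simpa using Real.cos_nat_mul_pi_sub 0 (i:ℕ)
  have hdeg : q.degree < (Finset.univ : Finset (Fin (n+1))).card := by
    rw [Finset.card_univ, Fintype.card_fin]
    have hT : (Chebyshev.T ℝ n).natDegree ≤ n :=
      natDegree_le_iff_degree_le.mpr (cheb_deg ℝ n)
    have hL : (C 1 - C (2/a) * X : ℝ[X]).natDegree ≤ 1 := by
      refine le_trans (natDegree_sub_le _ _) (max_le ?_ ?_)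
      · simp
      · exact le_trans (natDegree_mul_le) (by simp)
    have h1 : q.natDegree ≤ n := by
      refine le_trans natDegree_comp_le ?_
      calc (Chebyshev.T ℝ n).natDegree * (C 1 - C (2/a) * X : ℝ[X]).natDegree
          ≤ n * 1 := Nat.mul_le_mul hT hL
        _ = n := by ring
    calc q.degree ≤ (q.natDegree : WithBot ℕ) := degree_le_natDegree
      _ < ((n+1 : ℕ) : WithBot ℕ) := by exact_mod_cast Nat.lt_succ_of_le h1
  have hq : q = Lagrange.interpolate Finset.univ t (fun i => q.eval (t i)) :=
    Lagrange.eq_interpolate hinj hdeg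
  have hsum : ∑ i : Fin (n+1), (-1:ℝ)^(i:ℕ) * w i = q.eval (-1) := by
    conv_rhs => rw [hq]
    rw [Lagrange.interpolate_apply, eval_finset_sum]
    refine Finset.sum_congr rfl fun i _ => ?_
    rw [eval_mul, eval_C, heval i, hw i]
  have hqval : q.eval (-1) = (Polynomial.Chebyshev.T ℝ n).eval (1 + 2/a) := by
    rw [hqdef, eval_comp]
    norm_num
  -- nonnegativity facts
  have htpos : ∀ j : Fin (n+1), 0 ≤ t j := by
    intro j
    rw [ht]
    have h1 := Real.cos_le_one ((j:ℕ) * π / n)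
    nlinarith
  -- absolute values
  have habs : ∀ i : Fin (n+1), |w i| = (-1:ℝ)^(i:ℕ) * w i := by
    intro i
    set g : Fin (n+1) → ℝ := fun j => (t i - t j)⁻¹ * (-1 - t j) with hg
    have hwi : w i = ∏ j ∈ Finset.univ.erase i, g j := by
      rw [hw i, Lagrange.basis, eval_prod]
      refine Finset.prod_congr rfl fun j _ => ?_
      simp [Lagrange.basisDivisor, hg]
    have hcard : ((Finset.univ.erase i).filter (fun j => j < i)).card = (i:ℕ) := by
      have he : (Finset.univ.erase i).filter (fun j => j < i) = Finset.Iio i := by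
        ext j
        simp only [Finset.mem_filter, Finset.mem_erase, Finset.mem_univ, and_true,
          true_and, Finset.mem_Iio]
        constructor
        · exact fun h => h.2
        · exact fun h => ⟨ne_of_lt h, h⟩
      rw [he, Fin.card_Iio]
    have hgneg : ∀ j ∈ (Finset.univ.erase i).filter (fun j => j < i), g j < 0 := by
      intro j hj
      rcases Finset.mem_filter.mp hj with ⟨_, hji⟩
      have h1 : t j < t i := hmono hji
      have h2 : (-1:ℝ) - t j < 0 := by have := htpos j; linarith
      exact mul_neg_of_pos_of_neg (inv_pos.mpr (by linarith)) h2
    have hgpos : ∀ j ∈ (Finset.univ.erase i).filter (fun j => ¬ j < i), 0 < g j := by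
      intro j hj
      rcases Finset.mem_filter.mp hj with ⟨hje, hji⟩
      have hji' : i < j := lt_of_le_of_ne (not_lt.mp hji) (Ne.symm (Finset.mem_erase.mp hje).1)
      have h1 : t i < t j := hmono hji'
      have h2 : (-1:ℝ) - t j < 0 := by have := htpos j; linarith
      exact mul_pos_of_neg_of_neg (inv_neg''.mpr (by linarith)) h2
    have key : ∏ j ∈ Finset.univ.erase i, |g j| =
        (-1:ℝ)^(i:ℕ) * ∏ j ∈ Finset.univ.erase i, g j := by
      rw [← Finset.prod_filter_mul_prod_filter_not (Finset.univ.erase i) (fun j => j < i) g,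
          ← Finset.prod_filter_mul_prod_filter_not (Finset.univ.erase i) (fun j => j < i)
            (fun j => |g j|)]
      rw [Finset.prod_congr rfl (fun j hj => abs_of_neg (hgneg j hj)),
          Finset.prod_congr rfl (fun j hj => abs_of_pos (hgpos j hj))]
      rw [show (fun j => -g j) = fun j => (-1:ℝ) * g j from funext fun j => (neg_one_mul _).symm]
      rw [Finset.prod_mul_distrib, Finset.prod_const, hcard]
      ring
    rw [hwi, Finset.abs_prod, key]
  calc ∑ i : Fin (n+1), |w i| = ∑ i : Fin (n+1), (-1:ℝ)^(i:ℕ) * w i :=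
        Finset.sum_congr rfl fun i _ => habs i
    _ = q.eval (-1) := hsum
    _ = (Polynomial.Chebyshev.T ℝ n).eval (1 + 2/a) := hqval
end

section
/- Let $f: \mathbb{R} \to \mathbb{R}$ be $n$-times continuously differentiable on $[0,\infty)$ (one-sided derivatives at 0), let $0 \le t_0 < \cdots < t_n$, and let $w_i = \ell_i(-1)$ where $\ell_i$ are the Lagrange basis polynomials for the nodes. Define $E_n[f](x) = f(x)$ for $x \ge 0$ and $E_n[f](x) = \sum_{j=0}^n w_j f(-t_j x)$ for $x < 0$. Then $E_n[f]$ is $n$-times continuously differentiable on $\mathbb{R}$ wherever defined; i.e., for each $k = 0, \dots, n$, the $k$-th derivative of $\sum_j w_j f(-t_j x)$ at $x = 0^-$ equals $f^{(k)}(0^+)$. -/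
/-!
By the chain rule, the `k`-th one-sided derivative of `x ↦ f (-tⱼ x)` at `0⁻` is
`(-tⱼ)ᵏ f⁽ᵏ⁾(0⁺)`. Since Lagrange interpolation on `n + 1` nodes reproduces `Xᵏ` for `k ≤ n`,
evaluating at `-1` gives `∑ⱼ wⱼ tⱼᵏ = (-1)ᵏ`, so the weighted sum is `(-1)ᵏ (-1)ᵏ f⁽ᵏ⁾(0⁺)`.
-/

open Polynomial

section

variable {𝕜 F : Type*} [NontriviallyNormedField 𝕜] [NormedAddCommGroup F] [NormedSpace 𝕜 F]

theorem iteratedDerivWithin_comp_const_mul_of_mapsTo {n : ℕ} {f : 𝕜 → F} {s t : Set 𝕜}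
    (hs : UniqueDiffOn 𝕜 s) (ht : UniqueDiffOn 𝕜 t) (hf : ContDiffOn 𝕜 n f t) {c : 𝕜}
    (hst : Set.MapsTo (c * ·) s t) {x : 𝕜} (hx : x ∈ s) :
    iteratedDerivWithin n (fun y => f (c * y)) s x =
      c ^ n • iteratedDerivWithin n f t (c * x) := by
  induction n generalizing x with
  | zero => simp
  | succ n ih =>
    have hEq : s.EqOn (iteratedDerivWithin n (fun y => f (c * y)) s)
        (fun y => c ^ n • iteratedDerivWithin n f t (c * y)) :=
      fun y hy => ih hf.of_succ hy
    have hdiff : DifferentiableWithinAt 𝕜 (iteratedDerivWithin n f t) t (c * x) :=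
      hf.differentiableOn_iteratedDerivWithin (Nat.cast_lt.mpr n.lt_succ_self) ht _ (hst hx)
    have hdiff_comp :
        DifferentiableWithinAt 𝕜 (fun y => iteratedDerivWithin n f t (c * y)) s x :=
      hdiff.comp x (by fun_prop) hst
    rw [iteratedDerivWithin_succ, derivWithin_congr hEq (hEq hx),
      derivWithin_fun_const_smul (c ^ n) hdiff_comp, iteratedDerivWithin_succ,
      ← Function.comp_def, derivWithin.scomp x hdiff (by fun_prop) hst,
      derivWithin_const_mul _ differentiableWithinAt_id, derivWithin_id' _ _ (hs _ hx),
      smul_smul, mul_one, pow_succ]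

end

theorem Lagrange.sum_pow_mul_eval_basis {F ι : Type*} [Field F] [DecidableEq ι] {s : Finset ι}
    {v : ι → F} (hvs : Set.InjOn v s) {k : ℕ} (hk : k < s.card) (x : F) :
    ∑ i ∈ s, v i ^ k * (Lagrange.basis s v i).eval x = x ^ k := by
  have hdeg : ((X : F[X]) ^ k).degree < s.card := by
    rw [degree_X_pow]; exact_mod_cast hk
  have := congrArg (eval x) (Lagrange.eq_interpolate hvs hdeg)
  simpa [Lagrange.interpolate_apply, eval_finsetSum] using this.symm

/-- the extension `E_n[f](x) = ∑ⱼ wⱼ f(-tⱼ x)` for `x < 0` matches the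
one-sided derivatives of `f` at `0` up to order `n`, where `wⱼ = ℓⱼ(-1)`. -/
theorem stmt_17 (n : ℕ) (f : ℝ → ℝ) (hf : ContDiffOn ℝ n f (Set.Ici 0))
    (t : Fin (n + 1) → ℝ) (ht0 : 0 ≤ t 0) (htmono : StrictMono t)
    (w : Fin (n + 1) → ℝ)
    (hw : ∀ j, w j = (Lagrange.basis Finset.univ t j).eval (-1)) :
    ∀ k : ℕ, k ≤ n →
      iteratedDerivWithin k (fun x => ∑ j : Fin (n + 1), w j * f (-(t j) * x))
          (Set.Iic 0) 0 =
        iteratedDerivWithin k f (Set.Ici 0) 0 := by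
  intro k hk
  have hfk : ContDiffOn ℝ k f (Set.Ici 0) := hf.of_le (by exact_mod_cast hk)
  have hmaps : ∀ j, Set.MapsTo (-(t j) * ·) (Set.Iic 0) (Set.Ici 0) := fun j x hx => by
    have htj : 0 ≤ t j := ht0.trans (htmono.monotone (Fin.zero_le j))
    simpa using mul_nonneg_of_nonpos_of_nonpos (neg_nonpos.mpr htj) (Set.mem_Iic.mp hx)
  have h0 : (0 : ℝ) ∈ Set.Iic 0 := Set.mem_Iic.2 le_rfl
  have hterm : ∀ j, ContDiffOn ℝ k (fun x => w j * f (-(t j) * x)) (Set.Iic 0) := fun j =>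
    contDiffOn_const.mul (hfk.comp (by fun_prop) (hmaps j))
  have hvandermonde : ∑ j, t j ^ k * w j = (-1) ^ k := by
    simp_rw [hw]
    exact Lagrange.sum_pow_mul_eval_basis htmono.injective.injOn (by simpa [Nat.lt_succ_iff]) _
  calc iteratedDerivWithin k (fun x => ∑ j, w j * f (-(t j) * x)) (Set.Iic 0) 0
      = ∑ j, w j * ((-(t j)) ^ k * iteratedDerivWithin k f (Set.Ici 0) 0) := by
        rw [iteratedDerivWithin_fun_sum (f := fun j x => w j * f (-(t j) * x)) h0
          (uniqueDiffOn_Iic 0) fun j _ => hterm j 0 h0]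
        refine Finset.sum_congr rfl fun j _ => ?_
        rw [iteratedDerivWithin_const_mul_field, iteratedDerivWithin_comp_const_mul_of_mapsTo
          (uniqueDiffOn_Iic 0) (uniqueDiffOn_Ici 0) hfk (hmaps j) h0, mul_zero, smul_eq_mul]
    _ = ((-1) ^ k * ∑ j, t j ^ k * w j) * iteratedDerivWithin k f (Set.Ici 0) 0 := by
        simp_rw [Finset.mul_sum, Finset.sum_mul, neg_pow (t _)]
        refine Finset.sum_congr rfl fun j _ => by ring
    _ = iteratedDerivWithin k f (Set.Ici 0) 0 := by
        rw [hvandermonde, ← mul_pow, neg_one_mul, neg_neg, one_pow, one_mul]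
end

section
/- For $n \ge 1$, the $(n+1) \times (n+1)$ Vandermonde matrix $A$ with entries $A_{ij} = t_j^i$ built on any nonnegative nodes $0 \le t_0 < \cdots < t_n$ satisfies: the solution $w$ of $Aw = ((-1)^i)_{i=0}^n$ has $\|w\|_1 = \sum_i |w_i| = P(-1)$ where $P(x) = \sum_{i=0}^n (-1)^i \ell_i(x)$ is the unique polynomial of degree at most $n$ with $P(t_i) = (-1)^i$; consequently $\|w\|_1 \ge T_n(1 + 2/t_n)$. -/
/-! The moment equations say that `q ↦ ∑ⱼ wⱼ q(tⱼ)` is evaluation at `-1` on polynomials of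
degree `≤ n`. Applied to `ℓₖ` this gives `wₖ = ℓₖ(-1)`, whose sign is `(-1)^k` because `-1` lies
to the left of every node; hence `∑ |wₖ| = ∑ (-1)^k ℓₖ(-1) = P(-1)`. Any `q` of degree `≤ n` with
`|q(tⱼ)| ≤ 1` then satisfies `q(-1) = ∑ wⱼ q(tⱼ) ≤ ∑ |wⱼ|`, and `q(x) = Tₙ(1 - 2x/tₙ)` is such a
polynomial since `x ↦ 1 - 2x/tₙ` maps `[0, tₙ]` into `[-1, 1]`. -/

open Polynomial

theorem sum_mul_eval_eq_eval_of_sum_mul_pow_eq {R ι : Type*} [CommRing R] [Fintype ι]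
    {t w : ι → R} {x : R} {m : ℕ}
    (hw : ∀ i < m, ∑ j, w j * t j ^ i = x ^ i) {q : R[X]} (hq : q.natDegree < m) :
    ∑ j, w j * q.eval (t j) = q.eval x := by
  simp_rw [eval_eq_sum_range' hq, Finset.mul_sum]
  rw [Finset.sum_comm]
  refine Finset.sum_congr rfl fun i hi => ?_
  rw [← hw i (Finset.mem_range.mp hi), Finset.mul_sum]
  exact Finset.sum_congr rfl fun j _ => by ring

theorem eq_eval_basis_of_sum_mul_pow_eq {F ι : Type*} [Field F] [Fintype ι] [DecidableEq ι]
    {t w : ι → F} (ht : Function.Injective t) {x : F}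
    (hw : ∀ i < Fintype.card ι, ∑ j, w j * t j ^ i = x ^ i) (k : ι) :
    w k = (Lagrange.basis Finset.univ t k).eval x := by
  have hdeg : (Lagrange.basis Finset.univ t k).natDegree < Fintype.card ι := by
    rw [Lagrange.natDegree_basis ht.injOn (Finset.mem_univ k), Finset.card_univ]
    exact Nat.sub_lt (Fintype.card_pos_iff.mpr ⟨k⟩) one_pos
  rw [← sum_mul_eval_eq_eval_of_sum_mul_pow_eq hw hdeg, Finset.sum_eq_single k]
  · rw [Lagrange.eval_basis_self ht.injOn (Finset.mem_univ k), mul_one]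
  · intro j _ hjk
    rw [Lagrange.eval_basis_of_ne hjk.symm (Finset.mem_univ j), mul_zero]
  · exact fun hk => absurd (Finset.mem_univ k) hk

theorem Lagrange.neg_one_pow_mul_eval_basis_nonneg {m : ℕ} {t : Fin m → ℝ} (ht : StrictMono t)
    {x : ℝ} (hx : ∀ j, x ≤ t j) (k : Fin m) :
    0 ≤ (-1) ^ (k : ℕ) * (Lagrange.basis Finset.univ t k).eval x := by
  have hsign : (-1 : ℝ) ^ (k : ℕ) = ∏ j ∈ Finset.univ.erase k, if j < k then -1 else 1 := by
    rw [← Finset.prod_filter, Finset.prod_const]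
    congr
    rw [← Fin.card_Iio k]
    congr 1
    ext j
    simpa using ne_of_lt
  rw [hsign, Lagrange.basis, eval_prod, ← Finset.prod_mul_distrib]
  refine Finset.prod_nonneg fun j hj => ?_
  simp only [Lagrange.basisDivisor, eval_mul, eval_C, eval_sub, eval_X]
  have hxj := sub_nonpos.mpr (hx j)
  rcases lt_or_gt_of_ne (Finset.ne_of_mem_erase hj) with hjk | hkj
  · rw [if_pos hjk, neg_one_mul, ← mul_neg]
    exact mul_nonneg (inv_nonneg.mpr (sub_nonneg.mpr (ht hjk).le)) (neg_nonneg.mpr hxj)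
  · rw [if_neg hkj.not_gt, one_mul]
    exact mul_nonneg_of_nonpos_of_nonpos (inv_nonpos.mpr (sub_nonpos.mpr (ht hkj).le)) hxj

theorem eval_le_sum_abs_of_sum_mul_pow_eq {ι : Type*} [Fintype ι] {t w : ι → ℝ} {x : ℝ} {m : ℕ}
    (hw : ∀ i < m, ∑ j, w j * t j ^ i = x ^ i) {q : ℝ[X]} (hq : q.natDegree < m)
    (hq1 : ∀ j, |q.eval (t j)| ≤ 1) :
    q.eval x ≤ ∑ j, |w j| := by
  rw [← sum_mul_eval_eq_eval_of_sum_mul_pow_eq hw hq]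
  refine Finset.sum_le_sum fun j _ => ?_
  calc w j * q.eval (t j) ≤ |w j| * |q.eval (t j)| := by rw [← abs_mul]; exact le_abs_self _
    _ ≤ |w j| := mul_le_of_le_one_right (abs_nonneg _) (hq1 j)

theorem natDegree_comp_one_sub_C_mul_X_le {R : Type*} [CommRing R] (p : R[X]) (c : R) :
    (p.comp (1 - C c * X)).natDegree ≤ p.natDegree := by
  have hlin : (1 - C c * X).natDegree ≤ 1 := (natDegree_sub_le _ _).trans
    (max_le (natDegree_one.trans_le zero_le_one) ((natDegree_C_mul_le _ _).trans natDegree_X_le))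
  simpa using natDegree_comp_le.trans (Nat.mul_le_mul_left p.natDegree hlin)

theorem Polynomial.Chebyshev.abs_eval_T_one_sub_div_mul_le_one (n : ℤ) {a y : ℝ} (hy : 0 ≤ y)
    (hya : y ≤ a) :
    |(Chebyshev.T ℝ n).eval (1 - 2 / a * y)| ≤ 1 := by
  have hratio : y / a ≤ 1 := div_le_one_of_le₀ hya (hy.trans hya)
  have hratio' : 0 ≤ y / a := div_nonneg hy (hy.trans hya)
  refine Chebyshev.abs_eval_T_real_le_one n (abs_le.mpr ⟨?_, ?_⟩) <;>
    rw [div_mul_eq_mul_div, mul_div_assoc] <;> linarith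

theorem stmt_19_general (n : ℕ) (t : Fin (n + 1) → ℝ) (ht0 : 0 ≤ t 0)
    (htmono : StrictMono t)
    (w : Fin (n + 1) → ℝ)
    (hw : ∀ i : Fin (n + 1), ∑ j : Fin (n + 1), w j * t j ^ (i : ℕ) = (-1 : ℝ) ^ (i : ℕ))
    (P : ℝ[X])
    (hP : P = ∑ i : Fin (n + 1), C ((-1 : ℝ) ^ (i : ℕ)) * Lagrange.basis Finset.univ t i) :
    ∑ i : Fin (n + 1), |w i| = P.eval (-1) ∧
      (Polynomial.Chebyshev.T ℝ n).eval (1 + 2 / t (Fin.last n)) ≤ ∑ i : Fin (n + 1), |w i| := by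
  have hmoments : ∀ i < n + 1, ∑ j, w j * t j ^ i = (-1) ^ i := fun i hi => hw ⟨i, hi⟩
  have hnodes : ∀ j, 0 ≤ t j ∧ t j ≤ t (Fin.last n) := fun j =>
    ⟨ht0.trans (htmono.monotone (Fin.zero_le j)), htmono.monotone (Fin.le_last j)⟩
  have hw_eq : ∀ k, w k = (Lagrange.basis Finset.univ t k).eval (-1) :=
    eq_eval_basis_of_sum_mul_pow_eq htmono.injective (by simpa using hmoments)
  have habs : ∀ k : Fin (n + 1), |w k| = (-1) ^ (k : ℕ) * w k := fun k => by
    have hsign := Lagrange.neg_one_pow_mul_eval_basis_nonneg htmono (x := -1)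
      (fun j => by linarith [(hnodes j).1]) k
    rw [← hw_eq k] at hsign
    rw [← abs_of_nonneg hsign, abs_mul, abs_neg_one_pow, one_mul]
  refine ⟨?_, ?_⟩
  · rw [hP, eval_finsetSum]
    exact Finset.sum_congr rfl fun k _ => by rw [habs, hw_eq, eval_mul, eval_C]
  set a := t (Fin.last n)
  let Q : ℝ[X] := (Chebyshev.T ℝ n).comp (1 - C (2 / a) * X)
  have hQ : Q.eval (-1) = (Chebyshev.T ℝ n).eval (1 + 2 / a) := by simp [Q]
  rw [← hQ]
  refine eval_le_sum_abs_of_sum_mul_pow_eq hmoments ?_ fun j => ?_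
  · have := natDegree_comp_one_sub_C_mul_X_le (Chebyshev.T ℝ n) (2 / a)
    rw [Chebyshev.natDegree_T, Int.natAbs_natCast] at this
    exact Nat.lt_succ_of_le this
  · simpa [Q] using Chebyshev.abs_eval_T_one_sub_div_mul_le_one n (hnodes j).1 (hnodes j).2

/-- the 1-norm of the Vandermonde solution equals `P(-1)` for the
equioscillating interpolant `P = ∑ (-1)^i ℓᵢ`, and hence is at least `T_n(1 + 2/t_n)`. -/
theorem stmt_19 (n : ℕ) (hn : 1 ≤ n) (t : Fin (n + 1) → ℝ) (ht0 : 0 ≤ t 0)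
    (htmono : StrictMono t)
    (w : Fin (n + 1) → ℝ)
    (hw : ∀ i : Fin (n + 1), ∑ j : Fin (n + 1), w j * t j ^ (i : ℕ) = (-1 : ℝ) ^ (i : ℕ))
    (P : ℝ[X])
    (hP : P = ∑ i : Fin (n + 1), C ((-1 : ℝ) ^ (i : ℕ)) * Lagrange.basis Finset.univ t i) :
    ∑ i : Fin (n + 1), |w i| = P.eval (-1) ∧
      (Polynomial.Chebyshev.T ℝ n).eval (1 + 2 / t (Fin.last n)) ≤ ∑ i : Fin (n + 1), |w i| :=
  stmt_19_general n t ht0 htmono w hw P hP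
end
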